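/- Let A, B be bounded self-adjoint operators on a Hilbert space with A ≥ λI and B ≥ λI for some λ > 0 (hence both invertible with bounded inverse). If ‖A·B^{-1}‖ ≤ Ξ, then ‖A^{1/2}·B^{-1/2}‖ ≤ Ξ^{1/2}. -/

import Mathlib

open scoped InnerProductSpace

/-!
With `S = A^{1/2}` and `R = B^{-1/2}` self-adjoint, the C*-identity gives
`‖S R‖² = ‖R S² R‖ = ‖R A R‖`. Since `R A R` is self-adjoint its norm is its spectral radius,
and the spectral radius is invariant under cyclic permutation, so it equals the spectral radius
of `A R² = A B⁻¹`, which is at most `‖A B⁻¹‖ ≤ Ξ`. The lower bounds `A, B ≥ λ` put the spectra in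
`(0, ∞)`, where `√t · √t = t` and `t ↦ (√t)⁻¹` is continuous.
-/

theorem spectralRadius_mul_comm {𝕜 A : Type*} [NormedField 𝕜] [Ring A] [Algebra 𝕜 A] (a b : A) :
    spectralRadius 𝕜 (a * b) = spectralRadius 𝕜 (b * a) := by
  suffices h : ∀ x y : A, spectralRadius 𝕜 (x * y) ≤ spectralRadius 𝕜 (y * x) from
    le_antisymm (h a b) (h b a)
  intro x y
  refine iSup₂_le fun k hk => ?_
  rcases eq_or_ne k 0 with rfl | hk0
  · simp
  · have hk' : k ∈ spectrum 𝕜 (y * x) \ {0} := spectrum.nonzero_mul_comm (𝕜 := 𝕜) x y ▸ ⟨hk, hk0⟩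
    exact le_iSup₂ (f := fun k (_ : k ∈ spectrum 𝕜 (y * x)) => (‖k‖₊ : ENNReal)) k hk'.1

theorem norm_mul_sq_le_norm_star_mul_self_mul {A : Type*} [CStarAlgebra A] (s : A) {r : A}
    (hr : IsSelfAdjoint r) :
    ‖s * r‖ ^ 2 ≤ ‖star s * s * (r * r)‖ := by
  nontriviality A
  have hnn : (‖star (s * r) * (s * r)‖₊ : ENNReal) ≤ ‖star s * s * (r * r)‖₊ := calc
    _ = spectralRadius ℂ (star (s * r) * (s * r)) :=
        (IsSelfAdjoint.star_mul_self (s * r)).spectralRadius_eq_nnnorm.symm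
    _ = spectralRadius ℂ (r * (star s * s * r)) := by
        rw [star_mul, hr.star_eq]; simp only [mul_assoc]
    _ = spectralRadius ℂ (star s * s * (r * r)) := by
        rw [spectralRadius_mul_comm, mul_assoc]
    _ ≤ ‖star s * s * (r * r)‖₊ := spectrum.spectralRadius_le_nnnorm _
  rw [sq, ← CStarRing.norm_star_mul_self]
  exact_mod_cast hnn

section CFC

variable {A : Type*} [Ring A] [StarRing A] [TopologicalSpace A] [Algebra ℝ A]
  [ContinuousFunctionalCalculus ℝ A IsSelfAdjoint] {a : A}

theorem cfc_sqrt_mul_self (ha : IsSelfAdjoint a) (h : ∀ t ∈ spectrum ℝ a, 0 ≤ t) :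
    cfc Real.sqrt a * cfc Real.sqrt a = a := by
  rw [← cfc_mul .., cfc_congr fun t ht => Real.mul_self_sqrt (h t ht), cfc_id' ℝ a ha]

theorem cfc_inv_sqrt_mul_self (h : ∀ t ∈ spectrum ℝ a, 0 < t) :
    cfc (fun t : ℝ => (Real.sqrt t)⁻¹) a * cfc (fun t : ℝ => (Real.sqrt t)⁻¹) a =
      cfc (fun t : ℝ => t⁻¹) a := by
  have hcont : ContinuousOn (fun t : ℝ => (Real.sqrt t)⁻¹) (spectrum ℝ a) :=
    Real.continuous_sqrt.continuousOn.inv₀ fun t ht => (Real.sqrt_pos.mpr (h t ht)).ne'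
  rw [← cfc_mul _ _ a hcont hcont]
  exact cfc_congr fun t ht => by rw [← mul_inv, Real.mul_self_sqrt (h t ht).le]

end CFC

theorem ContinuousLinearMap.spectrum_subset_Ici_of_le_re_inner {H : Type*} [NormedAddCommGroup H]
    [InnerProductSpace ℂ H] [CompleteSpace H] {T : H →L[ℂ] H} (hT : IsSelfAdjoint T) {c : ℝ}
    (hc : ∀ v : H, c * ‖v‖ ^ 2 ≤ (⟪T v, v⟫_ℂ).re) :
    spectrum ℝ T ⊆ Set.Ici c := by
  have hle : algebraMap ℝ (H →L[ℂ] H) c ≤ T := by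
    rw [le_def, isPositive_def']
    refine ⟨hT.sub (.algebraMap _ (.all c)), fun v => ?_⟩
    have hsmul : (⟪c • v, v⟫_ℂ).re = c * ‖v‖ ^ 2 := by
      rw [RCLike.real_smul_eq_coe_smul (K := ℂ), inner_smul_left]
      simp [inner_self_eq_norm_sq_to_K, ← Complex.ofReal_pow]
    simpa [reApplyInnerSelf, inner_sub_left, Algebra.algebraMap_eq_smul_one, hsmul] using hc v
  exact (algebraMap_le_iff_le_spectrum (a := T)).mp hle

/-- A consequence of the Cordes inequality: if `A, B ≥ λI` are self-adjoint with
`‖A·B⁻¹‖ ≤ Ξ`, then `‖A^{1/2}·B^{-1/2}‖ ≤ Ξ^{1/2}`. -/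
theorem cordes_half_power {H : Type*} [NormedAddCommGroup H]
    [InnerProductSpace ℂ H] [CompleteSpace H]
    (A B : H →L[ℂ] H) (hA : IsSelfAdjoint A) (hB : IsSelfAdjoint B)
    (lam : ℝ) (hlam : 0 < lam)
    (hAlow : ∀ v : H, lam * ‖v‖ ^ 2 ≤ (⟪A v, v⟫_ℂ).re)
    (hBlow : ∀ v : H, lam * ‖v‖ ^ 2 ≤ (⟪B v, v⟫_ℂ).re)
    (Ξ : ℝ)
    (hΞ : ‖A ∘L cfc (fun t : ℝ => t⁻¹) B‖ ≤ Ξ) :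
    ‖cfc (fun t : ℝ => Real.sqrt t) A ∘L cfc (fun t : ℝ => (Real.sqrt t)⁻¹) B‖ ≤
      Real.sqrt Ξ := by
  have hA_nonneg : ∀ t ∈ spectrum ℝ A, 0 ≤ t := fun t ht =>
    hlam.le.trans (ContinuousLinearMap.spectrum_subset_Ici_of_le_re_inner hA hAlow ht)
  have hB_pos : ∀ t ∈ spectrum ℝ B, 0 < t := fun t ht =>
    hlam.trans_le (ContinuousLinearMap.spectrum_subset_Ici_of_le_re_inner hB hBlow ht)
  refine Real.le_sqrt_of_sq_le ?_
  calc _ ≤ ‖star (cfc Real.sqrt A) * cfc Real.sqrt A *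
          (cfc (fun t : ℝ => (Real.sqrt t)⁻¹) B * cfc (fun t : ℝ => (Real.sqrt t)⁻¹) B)‖ :=
        norm_mul_sq_le_norm_star_mul_self_mul _ (cfc_predicate _ B)
    _ = ‖A ∘L cfc (fun t : ℝ => t⁻¹) B‖ := by
        rw [IsSelfAdjoint.star_eq (cfc_predicate _ _), cfc_sqrt_mul_self hA hA_nonneg,
          cfc_inv_sqrt_mul_self hB_pos]
        rfl
    _ ≤ Ξ := hΞ
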